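/- arXiv:2005.02569 — 8 statements merged into one kernel-verified Lean document; each statement's English description precedes it below -/
import Mathlib

section
/- Let H and Q be finite groups of coprime orders such that Q is abelian and the automorphism group Aut(Q) is abelian, and let σ, ω : H → Aut(Q) be group homomorphisms. Then the semidirect products Q ⋊_σ H and Q ⋊_ω H are isomorphic as groups if and only if there exists an automorphism α of H such that ω(α(h)) = σ(h) for all h ∈ H. -/
open SemidirectProduct

/-- Let `H` and `Q` be finite groups of coprime orders such that `Q` is
abelian and `Aut(Q)` is abelian, and let `σ, ω : H → Aut(Q)` be group homomorphisms. Then the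
semidirect products `Q ⋊[σ] H` and `Q ⋊[ω] H` are isomorphic as groups if and only if there
exists an automorphism `α` of `H` such that `ω (α h) = σ h` for all `h ∈ H`. -/
theorem semidirectProduct_isomorphic_iff_exists_aut
    {H Q : Type*} [Group H] [CommGroup Q] [Finite H] [Finite Q]
    (hcop : Nat.Coprime (Nat.card H) (Nat.card Q))
    (hAut : ∀ a b : MulAut Q, a * b = b * a)
    (σ ω : H →* MulAut Q) :
    Nonempty ((Q ⋊[σ] H) ≃* (Q ⋊[ω] H)) ↔
      ∃ α : MulAut H, ∀ h : H, ω (α h) = σ h := by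
  constructor
  · rintro ⟨f⟩
    -- any hom from Q to H is trivial
    have triv : ∀ (g : Q →* H) (q : Q), g q = 1 := by
      intro g q
      have h1 : orderOf (g q) ∣ Nat.card Q :=
        (orderOf_map_dvd g q).trans (orderOf_dvd_natCard q)
      have h2 : orderOf (g q) ∣ Nat.card H := orderOf_dvd_natCard _
      have : orderOf (g q) ∣ 1 := hcop ▸ Nat.dvd_gcd h2 h1
      exact orderOf_eq_one_iff.mp (Nat.dvd_one.mp this)
    set θ : Q → Q := fun q => (f (inl q)).left with hθdef
    set θ' : Q → Q := fun q => (f.symm (inl q)).left with hθ'def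
    -- f maps inl to inl
    have hfl : ∀ q : Q, f (inl q) = inl (θ q) := by
      intro q
      have : rightHom (f (inl q)) = 1 :=
        triv (rightHom.comp (f.toMonoidHom.comp inl)) q
      conv_lhs => rw [← inl_left_mul_inr_right (f (inl q))]
      rw [show (f (inl q)).right = 1 from this, map_one, mul_one]
    have hfl' : ∀ q : Q, f.symm (inl q) = inl (θ' q) := by
      intro q
      have : rightHom (f.symm (inl q)) = 1 :=
        triv (rightHom.comp (f.symm.toMonoidHom.comp inl)) q
      conv_lhs => rw [← inl_left_mul_inr_right (f.symm (inl q))]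
      rw [show (f.symm (inl q)).right = 1 from this, map_one, mul_one]
    have hθmul : ∀ q₁ q₂, θ (q₁ * q₂) = θ q₁ * θ q₂ := by
      intro q₁ q₂
      apply inl_injective (φ := ω)
      rw [← hfl, map_mul inl, map_mul f, hfl, hfl, ← map_mul inl]
    have hθinv : ∀ q, θ' (θ q) = q := by
      intro q
      apply inl_injective (φ := σ)
      rw [← hfl', ← hfl, MulEquiv.symm_apply_apply]
    have hθinv' : ∀ q, θ (θ' q) = q := by
      intro q
      apply inl_injective (φ := ω)
      rw [← hfl, ← hfl', MulEquiv.apply_symm_apply]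
    have hθbij : Function.Bijective θ :=
      Function.bijective_iff_has_inverse.mpr ⟨θ', hθinv, hθinv'⟩
    -- α₀ : H →* H
    set α₀ : H →* H := rightHom.comp (f.toMonoidHom.comp inr) with hα₀
    have hα₀surj : Function.Surjective α₀ := by
      intro h
      refine ⟨(f.symm (inr h)).right, ?_⟩
      have hx : f.symm (inr h) = inl ((f.symm (inr h)).left) * inr ((f.symm (inr h)).right) :=
        (inl_left_mul_inr_right _).symm
      have : inr h = f (inl ((f.symm (inr h)).left)) * f (inr ((f.symm (inr h)).right)) := by
        rw [← map_mul, ← hx, MulEquiv.apply_symm_apply]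
      have h2 : rightHom (inr h : Q ⋊[ω] H) =
          rightHom (f (inl ((f.symm (inr h)).left))) *
            rightHom (f (inr ((f.symm (inr h)).right))) := by
        rw [← map_mul, ← this]
      rw [rightHom_inr, hfl, rightHom_inl, one_mul] at h2
      exact h2.symm
    have hα₀bij : Function.Bijective α₀ :=
      Finite.injective_iff_bijective.mp (Finite.injective_iff_surjective.mpr hα₀surj)
    set α : MulAut H := MulEquiv.ofBijective α₀ hα₀bij with hα
    refine ⟨α, fun h => ?_⟩
    -- key identity: θ (σ h q) = ω (α₀ h) (θ q)
    have key : ∀ q : Q, θ (σ h q) = ω (α₀ h) (θ q) := by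
      intro q
      have e1 : f (inl (σ h q)) = f (inr h) * f (inl q) * (f (inr h⁻¹)) := by
        rw [← map_mul, ← map_mul, ← inl_aut]
      rw [hfl, hfl q, map_inv] at e1
      have e2 := congrArg SemidirectProduct.left e1
      have hr : (f (inr h)).right = α₀ h := rfl
      simp only [left_inl, mul_left, mul_right, inv_left, inv_right, right_inl, mul_one,
        hr, map_inv] at e2
      rw [e2, show (ω (α₀ h)) ((ω (α₀ h))⁻¹ (f (inr h)).left) = (f (inr h)).left from by
        rw [← MulAut.mul_apply, mul_inv_cancel, MulAut.one_apply]]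
      rw [mul_comm ((f (inr h)).left), mul_assoc, mul_inv_cancel, mul_one]
    -- package θ as a MulAut and use commutativity of Aut Q
    set Θ : MulAut Q := MulEquiv.ofBijective (MonoidHom.mk' θ hθmul) hθbij with hΘ
    have hcomm : Θ * σ h = ω (α₀ h) * Θ := by
      ext q
      exact key q
    rw [hAut Θ (σ h)] at hcomm
    have hrfl : ω (α h) = ω (α₀ h) := rfl
    rw [hrfl]
    exact mul_right_cancel hcomm.symm
  · rintro ⟨α, hα⟩
    refine ⟨{ toFun := fun x => ⟨x.left, α x.right⟩,
              invFun := fun x => ⟨x.left, α.symm x.right⟩,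
              left_inv := by intro x; simp,
              right_inv := by intro x; simp,
              map_mul' := ?_ }⟩
    intro a b
    ext
    · simp only [mul_left, mul_right, hα]
    · simp only [mul_left, mul_right, map_mul]
end

section
/- Let a, b, a', b' be positive integers and r, r' integers with r^a ≡ 1 (mod b), gcd(a(r−1), b) = 1, r'^{a'} ≡ 1 (mod b'), and gcd(a'(r'−1), b') = 1. Then the groups G_{a,b,r} and G_{a',b',r'} are isomorphic if and only if a = a', b = b', and there exists an integer α with gcd(α, a) = 1 such that r^α ≡ r' (mod b). -/
/-- The residue class of `r` as a unit of `ZMod b`, where invertibility follows from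
`r ^ a ≡ 1 (mod b)` with `a ≠ 0`. -/
noncomputable def GabrUnit (a b : ℕ) (r : ℤ) (ha : a ≠ 0)
    (hr : r ^ a ≡ 1 [ZMOD (b : ℤ)]) : (ZMod b)ˣ :=
  (IsUnit.of_pow_eq_one (a := ((r : ZMod b))) (n := a)
    (by
      have h : ((r ^ a : ℤ) : ZMod b) = ((1 : ℤ) : ZMod b) :=
        (ZMod.intCast_eq_intCast_iff _ _ _).mpr hr
      push_cast at h
      exact h) ha).unit

/-- Additive automorphisms of `α`, viewed as multiplicative automorphisms of
`Multiplicative α`. -/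
def addAutToMulAut {α : Type*} [AddZeroClass α] :
    Multiplicative (AddAut α) →* MulAut (Multiplicative α) :=
  MonoidHom.mk' (fun f => AddEquiv.toMultiplicative f.toAdd) (fun f g => by ext x; rfl)

/-- The action homomorphism `ℤ/aℤ → Aut(ℤ/bℤ)` sending the generator `1` of `ℤ/aℤ` to
multiplication by `r` on `ℤ/bℤ` (written multiplicatively). -/
noncomputable def GabrAct (a b : ℕ) (r : ℤ) (ha : a ≠ 0)
    (hr : r ^ a ≡ 1 [ZMOD (b : ℤ)]) :
    Multiplicative (ZMod a) →* MulAut (Multiplicative (ZMod b)) :=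
  AddMonoidHom.toMultiplicativeLeft
    (ZMod.lift a ⟨zmultiplesHom _ (Additive.ofMul
        (addAutToMulAut (AddAut.mulLeft (GabrUnit a b r ha hr)))), by
      have hu : (GabrUnit a b r ha hr) ^ a = 1 := by
        ext
        push_cast
        rw [GabrUnit, IsUnit.unit_spec]
        have h : ((r ^ a : ℤ) : ZMod b) = ((1 : ℤ) : ZMod b) :=
          (ZMod.intCast_eq_intCast_iff _ _ _).mpr hr
        push_cast at h
        exact h
      rw [zmultiplesHom_apply, ← ofMul_zpow, ofMul_eq_zero,
        zpow_natCast, ← map_pow, ← map_pow, hu, map_one, map_one]⟩)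

/-- `G_{a,b,r}`: the semidirect product `(ℤ/bℤ) ⋊ (ℤ/aℤ)` in which the generator `1` of
`ℤ/aℤ` acts on `ℤ/bℤ` as multiplication by `r`. -/
abbrev Gabr (a b : ℕ) (r : ℤ) (ha : a ≠ 0) (hr : r ^ a ≡ 1 [ZMOD (b : ℤ)]) : Type :=
  Multiplicative (ZMod b) ⋊[GabrAct a b r ha hr] Multiplicative (ZMod a)

/-!
Because `r - 1` is invertible mod `b`, the commutator subgroup of `G_{a,b,r}` is exactly the
normal factor `ℤ/bℤ`; it has order `b` and index `a`, so an isomorphism forces `a = a'`, `b = b'`.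
An isomorphism `e : G_{a,b,r'} ≃ G_{a,b,r}` then restricts to an injective additive map `σ` of
`ℤ/bℤ`, which commutes with multiplication, and induces a surjective map `k ↦ k γ` of `ℤ/aℤ`, so
`γ` is a unit mod `a`. Transporting the relation `x y x⁻¹ = y ^ r'` gives `σ (r' y) = r ^ γ σ y`,
hence `r' ≡ r ^ γ (mod b)`. Conversely, if `r' ≡ r ^ α` with `α` a unit mod `a`, the identity on
`ℤ/bℤ` together with multiplication by `α` on `ℤ/aℤ` is an isomorphism `G_{a,b,r'} ≃ G_{a,b,r}`.
-/

open SemidirectProduct Multiplicative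
open scoped commutatorElement

theorem map_commutator_of_surjective {G H : Type*} [Group G] [Group H] {f : G →* H}
    (hf : Function.Surjective f) : (commutator G).map f = commutator H := by
  rw [commutator_def, Subgroup.map_commutator, Subgroup.map_top_of_surjective f hf,
    ← commutator_def]

theorem card_commutator_congr {G H : Type*} [Group G] [Group H] (e : G ≃* H) :
    Nat.card (commutator G) = Nat.card (commutator H) := by
  rw [← map_commutator_of_surjective (f := (e : G →* H)) e.surjective,
    Subgroup.card_map_of_injective (f := (e : G →* H)) e.injective]

theorem index_commutator_congr {G H : Type*} [Group G] [Group H] (e : G ≃* H) :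
    (commutator G).index = (commutator H).index := by
  rw [← map_commutator_of_surjective (f := (e : G →* H)) e.surjective, Subgroup.index_map_equiv]

theorem ZMod.map_ofAdd_mul {n : ℕ} (σ : Multiplicative (ZMod n) →* Multiplicative (ZMod n))
    (c x : ZMod n) : σ (ofAdd (c * x)) = ofAdd (c * toAdd (σ (ofAdd x))) :=
  ZMod.map_smul (AddMonoidHom.toMultiplicative.symm σ) c x

namespace SemidirectProduct

variable {N G N' G' : Type*} [Group N] [Group G] [Group N'] [Group G']
  {φ : G →* MulAut N} {φ' : G' →* MulAut N'}

theorem card_ker_rightHom : Nat.card (rightHom : N ⋊[φ] G →* G).ker = Nat.card N := by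
  rw [← range_inl_eq_ker_rightHom,
    ← Nat.card_congr (MonoidHom.ofInjective inl_injective).toEquiv]

theorem index_ker_rightHom : (rightHom : N ⋊[φ] G →* G).ker.index = Nat.card G := by
  rw [Subgroup.index_ker, MonoidHom.range_eq_top.2 rightHom_surjective, Subgroup.card_top]

theorem rightHom_map_eq_of_rightHom_inl (f : N ⋊[φ] G →* N' ⋊[φ'] G')
    (hf : ∀ n, rightHom (f (inl n)) = 1) (x : N ⋊[φ] G) :
    rightHom (f x) = rightHom (f (inr x.right)) := by
  conv_lhs => rw [← inl_left_mul_inr_right x]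
  rw [map_mul, map_mul, hf, one_mul]

def inlRestrict (f : N ⋊[φ] G →* N' ⋊[φ'] G') (hf : ∀ n, rightHom (f (inl n)) = 1) :
    N →* N' where
  toFun n := (f (inl n)).left
  map_one' := by simp
  map_mul' m n := by
    rw [map_mul, map_mul, mul_left, ← rightHom_eq_right, hf, map_one, MulAut.one_apply]

variable (f : N ⋊[φ] G →* N' ⋊[φ'] G') (hf : ∀ n, rightHom (f (inl n)) = 1)

theorem inl_inlRestrict (n : N) : inl (inlRestrict f hf n) = f (inl n) := by
  ext
  · rfl
  · exact (hf n).symm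

theorem inlRestrict_injective (hinj : Function.Injective f) :
    Function.Injective (inlRestrict f hf) := fun m n h => by
  rw [← inl_inj (φ := φ'), inl_inlRestrict, inl_inlRestrict] at h
  exact inl_injective (hinj h)

theorem inlRestrict_aut {N' : Type*} [CommGroup N'] {φ' : G' →* MulAut N'}
    (f : N ⋊[φ] G →* N' ⋊[φ'] G') (hf : ∀ n, rightHom (f (inl n)) = 1) (g : G) (n : N) :
    inlRestrict f hf (φ g n) = φ' (rightHom (f (inr g))) (inlRestrict f hf n) := by
  apply inl_injective (φ := φ')
  rw [inl_inlRestrict, inl_aut, map_mul, map_mul, ← inl_inlRestrict f hf]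
  ext <;> simp

end SemidirectProduct

section Gabr

variable {a b : ℕ} {r r' : ℤ} {ha : a ≠ 0} {hr : r ^ a ≡ 1 [ZMOD (b : ℤ)]}
  {hr' : r' ^ a ≡ 1 [ZMOD (b : ℤ)]}

@[simp]
theorem coe_gabrUnit : (GabrUnit a b r ha hr : ZMod b) = r :=
  IsUnit.unit_spec _

theorem gabrAct_ofAdd_intCast (k : ℤ) (x : ZMod b) :
    GabrAct a b r ha hr (ofAdd (k : ZMod a)) (ofAdd x)
      = ofAdd ((GabrUnit a b r ha hr ^ k : (ZMod b)ˣ) * x) := by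
  simp only [GabrAct, AddMonoidHom.coe_toMultiplicativeLeft, Function.comp_apply, toAdd_ofAdd,
    ZMod.lift_coe, zmultiplesHom_apply, ← ofMul_zpow, toMul_ofMul, ← map_zpow]
  rfl

/-- `inl y` is the commutator of `inr 1` and `inl ((r - 1)⁻¹ y)`. -/
theorem gabr_commutator_eq (hcop : IsCoprime (r - 1) (b : ℤ)) :
    commutator (Gabr a b r ha hr) =
      (rightHom : Gabr a b r ha hr →* Multiplicative (ZMod a)).ker := by
  refine le_antisymm (Abelianization.commutator_subset_ker _) ?_
  rw [← range_inl_eq_ker_rightHom]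
  rintro _ ⟨y, rfl⟩
  obtain ⟨c, d, hcd⟩ := hcop
  have hc : (c : ZMod b) * ((r : ZMod b) - 1) = 1 := by
    simpa using congrArg (Int.cast : ℤ → ZMod b) hcd
  have hcomm : ⁅(inr (ofAdd ((1 : ℤ) : ZMod a)) : Gabr a b r ha hr),
      (inl (ofAdd ((c : ZMod b) * toAdd y)) : Gabr a b r ha hr)⁆ = inl y := by
    rw [commutatorElement_def, ← map_inv inr, ← map_inv inl, ← inl_aut, gabrAct_ofAdd_intCast,
      ← map_mul]
    congr 1
    rw [zpow_one, coe_gabrUnit, ← ofAdd_neg, ← ofAdd_add]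
    apply toAdd.injective
    rw [toAdd_ofAdd]
    linear_combination (toAdd y) * hc
  rw [← hcomm]
  exact Subgroup.commutator_mem_commutator (Subgroup.mem_top _) (Subgroup.mem_top _)

theorem gabr_card_commutator (hcop : IsCoprime (r - 1) (b : ℤ)) :
    Nat.card (commutator (Gabr a b r ha hr)) = b := by
  rw [gabr_commutator_eq hcop, card_ker_rightHom, Nat.card_congr toAdd, Nat.card_zmod]

theorem gabr_index_commutator (hcop : IsCoprime (r - 1) (b : ℤ)) :
    (commutator (Gabr a b r ha hr)).index = a := by
  rw [gabr_commutator_eq hcop, index_ker_rightHom, Nat.card_congr toAdd, Nat.card_zmod]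

theorem gabr_rightHom_mulEquiv_inl (hcop : IsCoprime (r - 1) (b : ℤ))
    (hcop' : IsCoprime (r' - 1) (b : ℤ)) (e : Gabr a b r ha hr ≃* Gabr a b r' ha hr')
    (n : Multiplicative (ZMod b)) : rightHom (e (inl n)) = 1 := by
  have hn : inl n ∈ commutator (Gabr a b r ha hr) := by
    rw [gabr_commutator_eq hcop]
    exact rightHom_inl n
  have hen : e (inl n) ∈ commutator (Gabr a b r' ha hr') := by
    rw [← map_commutator_of_surjective (f := (e : Gabr a b r ha hr →* Gabr a b r' ha hr'))
      e.surjective]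
    exact ⟨inl n, hn, rfl⟩
  rwa [gabr_commutator_eq hcop'] at hen

theorem exists_gabrUnit_eq_zpow_of_mulEquiv (e : Gabr a b r ha hr ≃* Gabr a b r' ha hr')
    (he : ∀ n, rightHom (e (inl n)) = 1) :
    ∃ γ : ℤ, IsCoprime γ a ∧ GabrUnit a b r ha hr = GabrUnit a b r' ha hr' ^ γ := by
  let f : Gabr a b r ha hr →* Gabr a b r' ha hr' := e
  have hf : ∀ n, rightHom (f (inl n)) = 1 := he
  let τ := rightHom.comp (f.comp inr)
  obtain ⟨γ, hγ⟩ := ZMod.intCast_surjective (toAdd (τ (ofAdd 1)))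
  have hτ (k : ZMod a) : τ (ofAdd k) = ofAdd (k * γ) := by
    rw [hγ, ← ZMod.map_ofAdd_mul, mul_one]
  refine ⟨γ, ?_, ?_⟩
  · obtain ⟨x, hx⟩ := (rightHom_surjective.comp e.surjective) (ofAdd 1)
    have hτx : τ (ofAdd (toAdd x.right)) = ofAdd 1 :=
      (rightHom_map_eq_of_rightHom_inl f hf x).symm.trans hx
    rw [hτ] at hτx
    rw [← isCoprime_comm, ← ZMod.coe_int_isUnit_iff_isCoprime]
    exact IsUnit.of_mul_eq_one_right _ (ofAdd.injective hτx)
  · have hact := inlRestrict_aut f hf (ofAdd ((1 : ℤ) : ZMod a)) (ofAdd 1)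
    rw [show rightHom (f (inr (ofAdd ((1 : ℤ) : ZMod a)))) = ofAdd (γ : ZMod a) by
      rw [Int.cast_one, ← one_mul (γ : ZMod a), ← hτ]; rfl] at hact
    rw [gabrAct_ofAdd_intCast, ← ofAdd_toAdd (inlRestrict f hf (ofAdd 1)), gabrAct_ofAdd_intCast,
      zpow_one, ← ZMod.map_ofAdd_mul] at hact
    ext
    simpa using inlRestrict_injective f hf e.injective hact

noncomputable def gabrMulEquivOfZpow (α : ℤ) (hα : IsCoprime α (a : ℤ))
    (hu : GabrUnit a b r' ha hr' = GabrUnit a b r ha hr ^ α) :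
    Gabr a b r' ha hr' ≃* Gabr a b r ha hr :=
  SemidirectProduct.congr (MulEquiv.refl _)
    (addAutToMulAut (AddAut.mulLeft (ZMod.unitOfIsCoprime α hα))) fun g => by
      obtain ⟨k, rfl⟩ : ∃ k : ℤ, ofAdd (k : ZMod a) = g :=
        ⟨_, by rw [ZMod.intCast_cast, ZMod.cast_id', id, ofAdd_toAdd]⟩
      ext y
      change GabrAct a b r' ha hr' (ofAdd (k : ZMod a)) (ofAdd (toAdd y))
        = GabrAct a b r ha hr (ofAdd ((α : ZMod a) * k)) (ofAdd (toAdd y))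
      rw [← Int.cast_mul, gabrAct_ofAdd_intCast, gabrAct_ofAdd_intCast, hu, zpow_mul]

end Gabr

theorem gabr_isomorphic_iff_general (a b a' b' : ℕ) (ha : 0 < a) (ha' : 0 < a') (r r' : ℤ)
    (hr : r ^ a ≡ 1 [ZMOD (b : ℤ)]) (hgcd : Int.gcd ((a : ℤ) * (r - 1)) b = 1)
    (hr' : r' ^ a' ≡ 1 [ZMOD (b' : ℤ)]) (hgcd' : Int.gcd ((a' : ℤ) * (r' - 1)) b' = 1) :
    Nonempty (Gabr a b r ha.ne' hr ≃* Gabr a' b' r' ha'.ne' hr') ↔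
      (a = a' ∧ b = b' ∧ ∃ α : ℤ, Int.gcd α (a : ℤ) = 1 ∧
        ((GabrUnit a b r ha.ne' hr ^ α : (ZMod b)ˣ) : ZMod b) = (r' : ZMod b)) := by
  have hcop := (Int.isCoprime_iff_gcd_eq_one.mpr hgcd).of_mul_left_right
  have hcop' := (Int.isCoprime_iff_gcd_eq_one.mpr hgcd').of_mul_left_right
  constructor
  · rintro ⟨e⟩
    obtain rfl : b = b' := by
      simpa only [gabr_card_commutator hcop, gabr_card_commutator hcop'] using
        card_commutator_congr e
    obtain rfl : a = a' := by
      simpa only [gabr_index_commutator hcop, gabr_index_commutator hcop'] using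
        index_commutator_congr e
    obtain ⟨α, hα, hu⟩ := exists_gabrUnit_eq_zpow_of_mulEquiv e.symm
      (gabr_rightHom_mulEquiv_inl hcop' hcop e.symm)
    exact ⟨rfl, rfl, α, Int.isCoprime_iff_gcd_eq_one.mp hα, by rw [← hu, coe_gabrUnit]⟩
  · rintro ⟨rfl, rfl, α, hα, hu⟩
    exact ⟨(gabrMulEquivOfZpow α (Int.isCoprime_iff_gcd_eq_one.mpr hα)
      (Units.ext (by rw [coe_gabrUnit, hu]))).symm⟩

/-- For parameters `(a, b, r)` and `(a', b', r')` as in the classification of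
C-groups, the groups `G_{a,b,r}` and `G_{a',b',r'}` are isomorphic if and only if `a = a'`,
`b = b'`, and `r ^ α ≡ r' (mod b)` for some integer `α` coprime to `a` (the power `r ^ α` being
taken of the unit `r` of `ℤ/bℤ`). -/
theorem gabr_isomorphic_iff (a b a' b' : ℕ) (ha : 0 < a) (hb : 0 < b)
    (ha' : 0 < a') (hb' : 0 < b') (r r' : ℤ)
    (hr : r ^ a ≡ 1 [ZMOD (b : ℤ)]) (hgcd : Int.gcd ((a : ℤ) * (r - 1)) b = 1)
    (hr' : r' ^ a' ≡ 1 [ZMOD (b' : ℤ)]) (hgcd' : Int.gcd ((a' : ℤ) * (r' - 1)) b' = 1) :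
    Nonempty (Gabr a b r ha.ne' hr ≃* Gabr a' b' r' ha'.ne' hr') ↔
      (a = a' ∧ b = b' ∧ ∃ α : ℤ, Int.gcd α (a : ℤ) = 1 ∧
        ((GabrUnit a b r ha.ne' hr ^ α : (ZMod b)ˣ) : ZMod b) = (r' : ZMod b)) :=
  gabr_isomorphic_iff_general a b a' b' ha ha' r r' hr hgcd hr' hgcd'
end

section
/- Let a, b be positive integers and r an integer with r^a ≡ 1 (mod b) and gcd(a(r−1), b) = 1. Then the group G_{a,b,r} has order ab, every Sylow subgroup of G_{a,b,r} is cyclic, and the commutator subgroup of G_{a,b,r} is exactly the normal factor ℤ/bℤ (in particular it is cyclic of order b, and the quotient by it is cyclic of order a). -/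
/-!
`G_{a,b,r}` is an extension of the cyclic group `ℤ/aℤ` by the cyclic group `ℤ/bℤ`, and `a` and
`b` are coprime, so all of its Sylow subgroups are cyclic (`isZGroup_of_coprime`). The quotient
`ℤ/aℤ` is abelian, so the commutator subgroup lies in `ℤ/bℤ`; conversely the commutator of the
generator of `ℤ/aℤ` with `m ∈ ℤ/bℤ` is `(r - 1) m`, and `r - 1` is a unit modulo `b`, so every
element of `ℤ/bℤ` is a commutator.
-/

open scoped commutatorElement

namespace SemidirectProduct

variable {N : Type*} [Group N]

theorem commutatorElement_inr_inl {G : Type*} [Group G] {φ : G →* MulAut N} (g : G) (n : N) :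
    ⁅(inr g : N ⋊[φ] G), (inl n : N ⋊[φ] G)⁆ = inl (φ g n * n⁻¹) := by
  simp only [commutatorElement_def, map_mul, inl_aut, map_inv]

theorem commutator_eq_range_inl {G : Type*} [CommGroup G] {φ : G →* MulAut N} (g : G)
    (hg : Function.Surjective fun n : N => φ g n * n⁻¹) :
    commutator (N ⋊[φ] G) = (inl : N →* N ⋊[φ] G).range := by
  refine le_antisymm ?_ ?_
  · rw [range_inl_eq_ker_rightHom]
    exact Abelianization.commutator_subset_ker _
  rintro _ ⟨n, rfl⟩
  obtain ⟨m, rfl⟩ := hg n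
  rw [← commutatorElement_inr_inl]
  exact Subgroup.commutator_mem_commutator (Subgroup.mem_top _) (Subgroup.mem_top _)

end SemidirectProduct

theorem gabrAct_ofAdd_one (a b : ℕ) (r : ℤ) (ha : a ≠ 0) (hr : r ^ a ≡ 1 [ZMOD (b : ℤ)])
    (m : ZMod b) :
    GabrAct a b r ha hr (.ofAdd 1) (.ofAdd m) = .ofAdd (r * m) := by
  rw [GabrAct, AddMonoidHom.toMultiplicativeLeft_apply_apply, toAdd_ofAdd, ← Int.cast_one,
    ZMod.lift_coe, zmultiplesHom_apply, one_zsmul, toMul_ofMul]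
  rfl

theorem Gabr.commutator_eq_range_inl (a b : ℕ) (r : ℤ) (ha : a ≠ 0)
    (hr : r ^ a ≡ 1 [ZMOD (b : ℤ)]) (hrb : IsCoprime (r - 1) b) :
    commutator (Gabr a b r ha hr) = SemidirectProduct.inl.range := by
  obtain ⟨u, hu⟩ := (ZMod.coe_int_isUnit_iff_isCoprime (r - 1) b).mpr hrb.symm
  push_cast at hu
  refine SemidirectProduct.commutator_eq_range_inl (.ofAdd 1) fun n => ⟨.ofAdd (↑u⁻¹ * n.toAdd), ?_⟩
  dsimp only
  rw [gabrAct_ofAdd_one, ← ofAdd_neg, ← ofAdd_add, ← sub_eq_add_neg, ← sub_one_mul, ← mul_assoc,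
    ← hu, Units.mul_inv, one_mul, ofAdd_toAdd]

/-- For parameters `(a, b, r)` with `r ^ a ≡ 1 (mod b)` and
`gcd(a(r-1), b) = 1`, the group `G_{a,b,r}` has order `ab`, all of its Sylow subgroups are
cyclic, and its commutator subgroup is exactly the normal factor `ℤ/bℤ`; in particular the
commutator subgroup is cyclic of order `b` and the quotient by it is cyclic of order `a`. -/
theorem gabr_card_isCyclic_sylow_commutator (a b : ℕ) (ha : 0 < a) (hb : 0 < b) (r : ℤ)
    (hr : r ^ a ≡ 1 [ZMOD (b : ℤ)]) (hgcd : Int.gcd ((a : ℤ) * (r - 1)) b = 1) :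
    Nat.card (Gabr a b r ha.ne' hr) = a * b ∧
    (∀ (p : ℕ), p.Prime → ∀ P : Sylow p (Gabr a b r ha.ne' hr), IsCyclic ↥P) ∧
    commutator (Gabr a b r ha.ne' hr) =
      (SemidirectProduct.inl :
        Multiplicative (ZMod b) →* Gabr a b r ha.ne' hr).range ∧
    IsCyclic ↥(commutator (Gabr a b r ha.ne' hr)) ∧
    Nat.card ↥(commutator (Gabr a b r ha.ne' hr)) = b ∧
    IsCyclic (Gabr a b r ha.ne' hr ⧸ commutator (Gabr a b r ha.ne' hr)) ∧
    Nat.card (Gabr a b r ha.ne' hr ⧸ commutator (Gabr a b r ha.ne' hr)) = a := by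
  have hco : IsCoprime ((a : ℤ) * (r - 1)) b := Int.isCoprime_iff_gcd_eq_one.mpr hgcd
  have hba : Nat.Coprime b a := Int.isCoprime_iff_gcd_eq_one.mp hco.of_mul_left_left.symm
  have : NeZero b := ⟨hb.ne'⟩
  have hcard (n : ℕ) : Nat.card (Multiplicative (ZMod n)) = n := Nat.card_zmod n
  have hcomm := Gabr.commutator_eq_range_inl a b r ha.ne' hr hco.of_mul_left_right
  have eN : Multiplicative (ZMod b) ≃* commutator (Gabr a b r ha.ne' hr) :=
    (MonoidHom.ofInjective SemidirectProduct.inl_injective).trans (.subgroupCongr hcomm.symm)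
  have hker : commutator (Gabr a b r ha.ne' hr) = SemidirectProduct.rightHom.ker :=
    hcomm.trans SemidirectProduct.range_inl_eq_ker_rightHom
  have eQ : Gabr a b r ha.ne' hr ⧸ commutator (Gabr a b r ha.ne' hr) ≃* Multiplicative (ZMod a) :=
    (QuotientGroup.quotientMulEquivOfEq hker).trans
      (QuotientGroup.quotientKerEquivOfSurjective _ SemidirectProduct.rightHom_surjective)
  refine ⟨by rw [SemidirectProduct.card, hcard, hcard, mul_comm], ?_, hcomm,
    isCyclic_of_surjective _ eN.surjective, by rw [← Nat.card_congr eN.toEquiv, hcard],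
    isCyclic_of_surjective _ eQ.symm.surjective, by rw [Nat.card_congr eQ.toEquiv, hcard]⟩
  exact (isZGroup_of_coprime SemidirectProduct.range_inl_eq_ker_rightHom.ge
    (by rwa [hcard, hcard])).isZGroup
end

section
/- Every finite group G all of whose Sylow subgroups are cyclic is isomorphic to G_{a,b,r} for some positive integers a, b and integer r with 0 ≤ r < b (taking r = 0 when b = 1), a·b = |G|, b odd, r^a ≡ 1 (mod b), and gcd(a(r−1), b) = 1. -/
/-!
A finite Z-group `G` has cyclic commutator subgroup `B`, and `B` is a Hall subgroup; by
Schur–Zassenhaus it has a complement `H ≅ G ⧸ B`, which is cyclic as well. Hence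
`G ≅ ℤ/b ⋊ ℤ/a` with `b = |B|` and `a = |H|` coprime, and the generator of `ℤ/a` acts as
multiplication by some `r` with `r ^ a ≡ 1 (mod b)`. Since `r ≡ 1` modulo `d = gcd(r - 1, b)`,
reduction of the normal factor modulo `d` is a homomorphism to an abelian group; it kills the
commutator subgroup, which is all of `ℤ/b`, so `d = 1`. Finally `b` is odd because `r (r - 1)` is
even and coprime to `b`.
-/

open Multiplicative

section

variable {a b : ℕ}

theorem MulAut.apply_ofAdd_zmod (X : MulAut (Multiplicative (ZMod b))) (z : ZMod b) :
    X (ofAdd z) = ofAdd (toAdd (X (ofAdd 1)) * z) := by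
  have h := ZMod.map_smul (MulAutMultiplicative _ X).toAdd z 1
  rw [smul_eq_mul, smul_eq_mul, mul_one] at h
  rw [mul_comm]
  exact h

theorem MulAut.pow_apply_ofAdd_zmod (X : MulAut (Multiplicative (ZMod b))) (n : ℕ)
    (z : ZMod b) : (X ^ n) (ofAdd z) = ofAdd (toAdd (X (ofAdd 1)) ^ n * z) := by
  induction n generalizing z with
  | zero => simp
  | succ n ih => rw [pow_succ, MulAut.mul_apply, X.apply_ofAdd_zmod, ih, pow_succ, mul_assoc]

theorem MonoidHom.apply_ofAdd_zmod_apply_ofAdd [NeZero a]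
    (ψ : Multiplicative (ZMod a) →* MulAut (Multiplicative (ZMod b))) (k : ZMod a) (z : ZMod b) :
    ψ (ofAdd k) (ofAdd z) = ofAdd (toAdd (ψ (ofAdd 1) (ofAdd 1)) ^ k.val * z) := by
  rw [← MulAut.pow_apply_ofAdd_zmod, ← map_pow, ← ofAdd_nsmul, nsmul_one, ZMod.natCast_zmod_val]

theorem gabrAct_ofAdd_one_apply_ofAdd_one (r : ℤ) (ha : a ≠ 0) (hr : r ^ a ≡ 1 [ZMOD (b : ℤ)]) :
    toAdd (GabrAct a b r ha hr (ofAdd 1) (ofAdd 1)) = r := by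
  rw [← Int.cast_one (R := ZMod a)]
  simp only [GabrAct, AddMonoidHom.toMultiplicativeLeft_apply_apply, toAdd_ofAdd, ZMod.lift_coe]
  show ((GabrUnit a b r ha hr : ZMod b)) * 1 = r
  rw [mul_one, GabrUnit, IsUnit.unit_spec]

theorem gabrAct_apply (r : ℤ) (ha : a ≠ 0) (hr : r ^ a ≡ 1 [ZMOD (b : ℤ)]) (k : ZMod a)
    (z : ZMod b) :
    GabrAct a b r ha hr (ofAdd k) (ofAdd z) = ofAdd ((r : ZMod b) ^ k.val * z) := by
  have : NeZero a := ⟨ha⟩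
  rw [MonoidHom.apply_ofAdd_zmod_apply_ofAdd, gabrAct_ofAdd_one_apply_ofAdd_one]

theorem MonoidHom.exists_eq_gabrAct [NeZero b]
    (ψ : Multiplicative (ZMod a) →* MulAut (Multiplicative (ZMod b))) (ha : a ≠ 0) :
    ∃ (r : ℤ) (hr : r ^ a ≡ 1 [ZMOD (b : ℤ)]),
      0 ≤ r ∧ r < b ∧ (b = 1 → r = 0) ∧ ψ = GabrAct a b r ha hr := by
  have : NeZero a := ⟨ha⟩
  set c := toAdd (ψ (ofAdd 1) (ofAdd 1))
  have hcr : ((c.val : ℤ) : ZMod b) = c := by simp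
  have hr : (c.val : ℤ) ^ a ≡ 1 [ZMOD (b : ℤ)] := by
    have h := (ψ (ofAdd 1)).pow_apply_ofAdd_zmod a 1
    rw [← map_pow, ← ofAdd_nsmul, nsmul_one, ZMod.natCast_self, ofAdd_zero, map_one,
      mul_one] at h
    rw [← ZMod.intCast_eq_intCast_iff, Int.cast_pow, hcr, Int.cast_one]
    exact (ofAdd.injective h).symm
  have hc := c.val_lt
  refine ⟨c.val, hr, by positivity, by omega, by omega, ?_⟩
  refine MonoidHom.ext fun g => MulEquiv.ext fun z => ?_
  rw [← ofAdd_toAdd g, ← ofAdd_toAdd z, ψ.apply_ofAdd_zmod_apply_ofAdd, gabrAct_apply, hcr]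

theorem isCoprime_sub_one_of_range_inl_le_commutator (r : ℤ) (ha : a ≠ 0)
    (hr : r ^ a ≡ 1 [ZMOD (b : ℤ)])
    (h : SemidirectProduct.inl.range ≤ commutator (Gabr a b r ha hr)) :
    IsCoprime (r - 1) b := by
  set d := Int.gcd (r - 1) b
  have hdb : d ∣ b := Int.ofNat_dvd.mp (Int.gcd_dvd_right _ _)
  have hrd : (r : ZMod d) = 1 := by
    rw [← sub_eq_zero, ← Int.cast_one, ← Int.cast_sub, ZMod.intCast_zmod_eq_zero_iff_dvd]
    exact Int.gcd_dvd_left _ _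
  let π : Multiplicative (ZMod b) →* Multiplicative (ZMod d) :=
    (ZMod.castHom hdb (ZMod d)).toAddMonoidHom.toMultiplicative
  let f : Gabr a b r ha hr →* Multiplicative (ZMod d) := SemidirectProduct.lift π 1 fun g => by
    refine MonoidHom.ext fun z => ?_
    obtain ⟨k, rfl⟩ := ofAdd.surjective g
    obtain ⟨w, rfl⟩ := ofAdd.surjective z
    show π (GabrAct a b r ha hr (ofAdd k) (ofAdd w)) = MulAut.conj 1 (π (ofAdd w))
    simp [π, gabrAct_apply, ZMod.cast_mul hdb, ZMod.cast_pow hdb, ZMod.cast_intCast hdb, hrd]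
  have h1 : f (SemidirectProduct.inl (ofAdd 1)) = 1 :=
    Abelianization.commutator_subset_ker f (h ⟨_, rfl⟩)
  have hd : d = 1 := by
    simpa [f, π, ZMod.cast_one hdb, ZMod.one_eq_zero_iff] using h1
  exact Int.isCoprime_iff_gcd_eq_one.mpr hd

end

theorem Int.odd_of_isCoprime_mul_sub_one {r b : ℤ} (h : IsCoprime (r * (r - 1)) b) : Odd b := by
  rw [← Int.not_even_iff_odd]
  intro hb
  have h2 : IsUnit (2 : ℤ) := h.isUnit_of_dvd' (Int.even_mul_pred_self r).two_dvd hb.two_dvd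
  norm_num [Int.isUnit_iff] at h2

theorem Int.isCoprime_of_pow_modEq_one {r b : ℤ} {a : ℕ} (ha : a ≠ 0) (hr : r ^ a ≡ 1 [ZMOD b]) :
    IsCoprime r b := by
  obtain ⟨k, hk⟩ := hr.symm.dvd
  exact (IsCoprime.pow_left_iff (Nat.pos_of_ne_zero ha)).mp ⟨1, -k, by linarith⟩

theorem Subgroup.IsComplement'.exists_mulEquiv_zmod_semidirectProduct {G : Type*} [Group G]
    {N H : Subgroup G} [N.Normal] [IsCyclic N] [IsCyclic H] (h : N.IsComplement' H) :
    ∃ (ψ : Multiplicative (ZMod (Nat.card H)) →* MulAut (Multiplicative (ZMod (Nat.card N))))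
      (e : G ≃* Multiplicative (ZMod (Nat.card N)) ⋊[ψ] Multiplicative (ZMod (Nat.card H))),
      SemidirectProduct.inl.range ≤ N.map e.toMonoidHom := by
  let eN := zmodCyclicMulEquiv (inferInstance : IsCyclic N)
  let eH := zmodCyclicMulEquiv (inferInstance : IsCyclic H)
  refine ⟨_, (SemidirectProduct.mulEquivSubgroup h).symm.trans
    (SemidirectProduct.congr' eN.symm eH.symm), ?_⟩
  rintro _ ⟨z, rfl⟩
  have hinl : (SemidirectProduct.mulEquivSubgroup h).symm (eN z) = .inl (eN z) := by
    rw [MulEquiv.symm_apply_eq]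
    simp
  refine ⟨eN z, (eN z).2, ?_⟩
  rw [MulEquiv.coe_toMonoidHom, MulEquiv.trans_apply, hinl]
  ext
  exacts [eN.symm_apply_apply z, map_one eH.symm]

/-- Every finite group `G` all of whose Sylow subgroups are cyclic is
isomorphic to `G_{a,b,r}` for some positive integers `a, b` and integer `r` with
`0 ≤ r < b` (with `r = 0` when `b = 1`), `a * b = |G|`, `b` odd, `r ^ a ≡ 1 (mod b)` and
`gcd(a(r-1), b) = 1`. -/
theorem cgroup_isomorphic_gabr {G : Type*} [Group G] [Finite G]
    (hC : ∀ (p : ℕ), p.Prime → ∀ P : Sylow p G, IsCyclic ↥P) :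
    ∃ (a b : ℕ) (r : ℤ) (ha : 0 < a) (hb : 0 < b)
      (h0 : 0 ≤ r) (h1 : r < (b : ℤ)) (h01 : b = 1 → r = 0)
      (hab : a * b = Nat.card G) (hodd : Odd b)
      (hr : r ^ a ≡ 1 [ZMOD (b : ℤ)]) (hgcd : Int.gcd ((a : ℤ) * (r - 1)) b = 1),
      Nonempty (G ≃* Gabr a b r ha.ne' hr) := by
  have : IsZGroup G := ⟨hC⟩
  have hcop := IsZGroup.coprime_commutator_index G
  obtain ⟨H, hH⟩ := Subgroup.exists_right_complement'_of_coprime hcop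
  have := IsZGroup.isCyclic_commutator G
  have : IsCyclic H :=
    let e : Abelianization G ≃* H := hH.symm.QuotientMulEquiv
    isCyclic_of_surjective e e.surjective
  obtain ⟨ψ, e, he⟩ := hH.exists_mulEquiv_zmod_semidirectProduct
  have ha : 0 < Nat.card H := Nat.card_pos
  obtain ⟨r, hr, h0, h1, h01, rfl⟩ := ψ.exists_eq_gabrAct ha.ne'
  have hcomm : SemidirectProduct.inl.range ≤ commutator (Gabr _ _ r ha.ne' hr) := by
    rwa [map_commutator_eq, e.toMonoidHom.range_eq_top_of_surjective e.surjective,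
      ← commutator_def] at he
  have hr1 := isCoprime_sub_one_of_range_inl_le_commutator r ha.ne' hr hcomm
  have hHB : IsCoprime (Nat.card H : ℤ) (Nat.card (commutator G)) :=
    Nat.isCoprime_iff_coprime.mpr (hH.symm.index_eq_card ▸ hcop.symm)
  refine ⟨_, _, r, ha, Nat.card_pos, h0, h1, h01, by rw [mul_comm, hH.card_mul_card],
    (Int.odd_coe_nat _).mp (Int.odd_of_isCoprime_mul_sub_one
      ((Int.isCoprime_of_pow_modEq_one ha.ne' hr).mul_left hr1)),
    hr, Int.isCoprime_iff_gcd_eq_one.mp (hHB.mul_left hr1), ⟨e⟩⟩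
end

section
/- Let G be a finite C-group, let p and q be distinct primes, let Q be a Sylow q-subgroup of G that is normal in G, and let P be a Sylow p-subgroup of G whose conjugation action on Q is nontrivial (i.e., some element of P does not centralize Q). Then p does not divide the order of the commutator subgroup G' of G, q divides the order of G', and Q is contained in G'. -/
/-!
A finite C-group is a Z-group, so its commutator subgroup `G'` is cyclic and of order coprime to
its index. The normal cyclic Sylow subgroup `Q` is either central or contained in `G'`; it is not
central, since `P` acts nontrivially on it, so `Q ≤ G'`. If `p` divided `|G'|`, then `p` would not
divide `|G : G'|`, forcing `P ≤ G'`; but then `P` and `Q` would commute inside the abelian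
group `G'`.
-/

theorem IsPGroup.le_of_not_dvd_index {G : Type*} [Group G] [Finite G] {p : ℕ} [Fact p.Prime]
    {P : Subgroup G} (hP : IsPGroup p P) {H : Subgroup G} [H.Normal] (hH : ¬ p ∣ H.index) :
    P ≤ H := by
  obtain ⟨n, hn⟩ := hP.exists_card_eq
  have hcop : H.index.Coprime (Nat.card P) := hn ▸ Nat.Prime.coprime_pow_of_not_dvd Fact.out hH
  exact Subgroup.relIndex_eq_one.mp <| Nat.eq_one_of_dvd_coprimes hcop
    (H.relIndex_dvd_index_of_normal P) (H.relIndex_dvd_card P)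

theorem IsZGroup.le_commutator_of_dvd_card_commutator {G : Type*} [Group G] [Finite G]
    [IsZGroup G] {p : ℕ} [Fact p.Prime] {P : Subgroup G} (hP : IsPGroup p P)
    (hp : p ∣ Nat.card (commutator G)) : P ≤ commutator G :=
  hP.le_of_not_dvd_index fun hi ↦
    Nat.Prime.not_coprime_iff_dvd.mpr ⟨p, Fact.out, hp, hi⟩ (coprime_commutator_index G)

theorem IsZGroup.commute_of_mem_commutator {G : Type*} [Group G] [Finite G] [IsZGroup G]
    {g h : G} (hg : g ∈ commutator G) (hh : h ∈ commutator G) : Commute g h := by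
  have := isCyclic_commutator G
  exact Subgroup.mem_centralizer_iff.mp
    (Subgroup.le_centralizer_iff_isMulCommutative.mpr inferInstance hh) g hg

theorem cgroup_acting_prime_commutator_general {G : Type*} [Group G] [Finite G]
    (hC : ∀ (r : ℕ), r.Prime → ∀ P : Sylow r G, IsCyclic ↥P)
    (p q : ℕ) (hp : p.Prime) (hq : q.Prime)
    (Q : Sylow q G) (hQ : (Q : Subgroup G).Normal)
    (P : Sylow p G)
    (hnt : ∃ g ∈ (P : Subgroup G), ∃ y ∈ (Q : Subgroup G), g⁻¹ * y * g ≠ y) :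
    ¬ p ∣ Nat.card ↥(commutator G) ∧ q ∣ Nat.card ↥(commutator G) ∧
      (Q : Subgroup G) ≤ commutator G := by
  have : Fact p.Prime := ⟨hp⟩
  have : Fact q.Prime := ⟨hq⟩
  have : IsZGroup G := ⟨hC⟩
  obtain ⟨g, hgP, y, hyQ, hgy⟩ := hnt
  replace hgy : ¬ Commute g y := fun h ↦ hgy (by rw [mul_assoc, ← h.eq, inv_mul_cancel_left])
  have hQG' : (Q : Subgroup G) ≤ commutator G :=
    Q.le_center_or_le_commutator.resolve_left fun h ↦ hgy (Subgroup.mem_center_iff.mp (h hyQ) g)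
  refine ⟨fun hpG' ↦ hgy ?_, ?_, hQG'⟩
  · exact IsZGroup.commute_of_mem_commutator
      (IsZGroup.le_commutator_of_dvd_card_commutator P.isPGroup' hpG' hgP) (hQG' hyQ)
  · have hQ1 : Nat.card (Q : Subgroup G) ≠ 1 := fun h ↦
      hgy (Subgroup.mem_bot.mp (Subgroup.card_eq_one.mp h ▸ hyQ) ▸ Commute.one_right g)
    exact (Q.isPGroup'.card_eq_or_dvd.resolve_left hQ1).trans (Subgroup.card_dvd_of_le hQG')

/-- Let `G` be a finite C-group, `p ≠ q` primes, `Q` a normal Sylow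
`q`-subgroup and `P` a Sylow `p`-subgroup whose conjugation action on `Q` is nontrivial.
Then `p` does not divide `|G'|`, `q` divides `|G'|`, and `Q ≤ G'`, where `G'` is the
commutator subgroup. -/
theorem cgroup_acting_prime_commutator {G : Type*} [Group G] [Finite G]
    (hC : ∀ (r : ℕ), r.Prime → ∀ P : Sylow r G, IsCyclic ↥P)
    (p q : ℕ) (hp : p.Prime) (hq : q.Prime) (hpq : p ≠ q)
    (Q : Sylow q G) (hQ : (Q : Subgroup G).Normal)
    (P : Sylow p G)
    (hnt : ∃ g ∈ (P : Subgroup G), ∃ y ∈ (Q : Subgroup G), g⁻¹ * y * g ≠ y) :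
    ¬ p ∣ Nat.card ↥(commutator G) ∧ q ∣ Nat.card ↥(commutator G) ∧
      (Q : Subgroup G) ≤ commutator G :=
  cgroup_acting_prime_commutator_general hC p q hp hq Q hQ P hnt
end

section
/- Let G be a nontrivial finite C-group and let q be the largest prime dividing |G|. Then the Sylow q-subgroup Q of G is normal in G, and Q has a complement H in G, i.e., there is a subgroup H ≤ G with H ∩ Q = 1 and H·Q = G; in particular G is an internal semidirect product H ⋉ Q, and H is again a C-group. -/
/-!
Induct on `|G|`. Let `p` be the smallest prime dividing `|G|`. If `p = q`, then `G` is a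
`q`-group. Otherwise a (cyclic) Sylow `p`-subgroup `P` has a normal complement `N` by Burnside's
transfer theorem. `N` is a smaller C-group whose prime divisors are still at most `q`, so by
induction its Sylow `q`-subgroup is normal, hence characteristic in `N`. It is therefore normal
in `G`, and it is a Sylow `q`-subgroup of `G` because `[G : N] = |P|` is prime to `q`.
The complement of the normal Sylow `q`-subgroup comes from Schur–Zassenhaus, and subgroups of
C-groups are C-groups.
-/

open Subgroup

namespace Sylow

variable {G : Type*} [Group G] [Finite G] {q : ℕ} [Fact q.Prime]

theorem eq_top_of_forall_prime_dvd_card_eq (h : ∀ r : ℕ, r.Prime → r ∣ Nat.card G → r = q)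
    (Q : Sylow q G) : (Q : Subgroup G) = ⊤ := by
  rw [← index_eq_one]
  by_contra hne
  obtain ⟨r, hr, hrQ⟩ := Nat.exists_prime_and_dvd hne
  obtain rfl := h r hr (hrQ.trans Q.index_dvd_card)
  exact Q.not_dvd_index hrQ

theorem normal_of_normal_of_not_dvd_index {N : Subgroup G} [N.Normal] (hN : ¬ q ∣ N.index)
    (R : Sylow q N) (hR : (R : Subgroup N).Normal) (Q : Sylow q G) :
    (Q : Subgroup G).Normal := by
  have : (R : Subgroup N).Characteristic := R.characteristic_of_normal hR
  let S : Sylow q G := (R.isPGroup'.map N.subtype).toSylow (by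
    rw [index_map_subtype, Nat.Prime.dvd_mul Fact.out]
    exact not_or.2 ⟨R.not_dvd_index, hN⟩)
  have hS : ((R : Subgroup N).map N.subtype).Normal := inferInstance
  have := unique_of_normal S hS
  rwa [Subsingleton.elim Q S]

end Sylow

theorem IsZGroup.normal_sylow_of_forall_prime_le {G : Type*} [Group G] [Finite G] [IsZGroup G]
    {q : ℕ} [hq : Fact q.Prime] (hqmax : ∀ r : ℕ, r.Prime → r ∣ Nat.card G → r ≤ q)
    (Q : Sylow q G) : (Q : Subgroup G).Normal := by
  induction h : Nat.card G using Nat.strong_induction_on generalizing G with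
  | _ n ih =>
  subst h
  by_cases hGq : ∀ r : ℕ, r.Prime → r ∣ Nat.card G → r = q
  · rw [Q.eq_top_of_forall_prime_dvd_card_eq hGq]
    infer_instance
  push Not at hGq
  obtain ⟨r, hr, hrG, hrq⟩ := hGq
  have hG1 : Nat.card G ≠ 1 := fun h1 => hr.ne_one (Nat.dvd_one.mp (h1 ▸ hrG))
  set p := (Nat.card G).minFac
  have hp : Fact p.Prime := ⟨Nat.minFac_prime hG1⟩
  have hpq : p ≠ q := fun hpq =>
    hrq (le_antisymm (hqmax r hr hrG) (hpq ▸ Nat.minFac_le_of_dvd hr.two_le hrG))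
  obtain ⟨P⟩ := (inferInstance : Nonempty (Sylow p G))
  have hPN := IsCyclic.isComplement' rfl (IsZGroup.isZGroup p hp.out P)
  set N := (MonoidHom.transferSylow P _).ker
  have hqP : ¬ q ∣ Nat.card P := by
    obtain ⟨k, hk⟩ := P.isPGroup'.exists_card_eq
    rw [hk, ← hq.out.coprime_iff_not_dvd]
    exact ((Nat.coprime_primes hq.out hp.out).2 hpq.symm).pow_right k
  have hNG : Nat.card N < Nat.card G := by
    have hP1 : 1 < Nat.card P := hp.out.one_lt.trans_le
      (Nat.le_of_dvd Nat.card_pos (P.dvd_card_of_dvd_card (Nat.minFac_dvd _)))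
    rw [← hPN.card_mul_card]
    exact lt_mul_of_one_lt_right Nat.card_pos hP1
  obtain ⟨R⟩ := (inferInstance : Nonempty (Sylow q N))
  refine Sylow.normal_of_normal_of_not_dvd_index (hPN.symm.index_eq_card ▸ hqP) R ?_ Q
  exact ih _ hNG (fun r hr hrN => hqmax r hr (hrN.trans N.card_subgroup_dvd_card)) R rfl

theorem cgroup_split_by_largest_prime_general {G : Type*} [Group G] [Finite G]
    (hC : ∀ (p : ℕ), p.Prime → ∀ P : Sylow p G, IsCyclic ↥P)
    (q : ℕ) (hq : q.Prime)
    (hqmax : ∀ r : ℕ, r.Prime → r ∣ Nat.card G → r ≤ q)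
    (Q : Sylow q G) :
    (Q : Subgroup G).Normal ∧
    ∃ H : Subgroup G,
      H ⊓ (Q : Subgroup G) = ⊥ ∧
      (∀ g : G, ∃ h ∈ H, ∃ n ∈ (Q : Subgroup G), g = h * n) ∧
      (∀ (p : ℕ), p.Prime → ∀ P : Sylow p ↥H, IsCyclic ↥P) := by
  have : Fact q.Prime := ⟨hq⟩
  have : IsZGroup G := ⟨hC⟩
  have hQ : (Q : Subgroup G).Normal := IsZGroup.normal_sylow_of_forall_prime_le hqmax Q
  obtain ⟨H, hHQ⟩ := exists_left_complement'_of_coprime Q.card_coprime_index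
  refine ⟨hQ, H, hHQ.disjoint.eq_bot, fun g => ?_, IsZGroup.isZGroup⟩
  obtain ⟨⟨h, n⟩, hg, -⟩ := hHQ.existsUnique g
  exact ⟨h, h.2, n, n.2, hg.symm⟩

/-- Let `G` be a nontrivial finite C-group and `q` the largest prime
dividing `|G|`. Then any Sylow `q`-subgroup `Q` of `G` is normal and has a complement
`H` in `G` (so `G = H ⋉ Q` internally), and `H` is again a C-group. -/
theorem cgroup_split_by_largest_prime {G : Type*} [Group G] [Finite G] [Nontrivial G]
    (hC : ∀ (p : ℕ), p.Prime → ∀ P : Sylow p G, IsCyclic ↥P)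
    (q : ℕ) (hq : q.Prime) (hqdvd : q ∣ Nat.card G)
    (hqmax : ∀ r : ℕ, r.Prime → r ∣ Nat.card G → r ≤ q)
    (Q : Sylow q G) :
    (Q : Subgroup G).Normal ∧
    ∃ H : Subgroup G,
      H ⊓ (Q : Subgroup G) = ⊥ ∧
      (∀ g : G, ∃ h ∈ H, ∃ n ∈ (Q : Subgroup G), g = h * n) ∧
      (∀ (p : ℕ), p.Prime → ∀ P : Sylow p ↥H, IsCyclic ↥P) :=
  cgroup_split_by_largest_prime_general hC q hq hqmax Q
end

section
/- Let H be a finite C-group with commutator subgroup H', let p be a prime not dividing |H'|, and let P = ⟨x⟩ be a Sylow p-subgroup of H. Let q be a prime and S the Sylow q-subgroup of H' (which is normal in H), and suppose conjugation by x induces an automorphism of S of order p^c with c ≥ 1. Then: (i) for every automorphism β of H there exists an integer t with β(x)H' = x^t H', and every such t satisfies t ≡ 1 (mod p^c); (ii) consequently, for every abelian group M and every group homomorphism σ : H → M with σ(x)^{p^c} = 1, one has σ(β(x)) = σ(x) for all automorphisms β of H. -/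
/-! Since `H` is a Z-group, `H'` is cyclic, so the Sylow subgroup `N` of `H'` is characteristic
and cyclic in `H`, with abelian automorphism group. Hence `β x` and `x` induce the same
automorphism of `N`, of order `p ^ c`. As `β x` generates a conjugate of `P = ⟨x⟩`, its class
modulo `H'` is some `x ^ t`; then `x⁻ᵗ β x ∈ H'` acts on `N` as `x ^ (1 - t)`, with order dividing
both `p ^ c` and `|H'|`, hence trivially, so `p ^ c ∣ t - 1`. -/

/-- The automorphism of a subgroup `S` induced by conjugation `y ↦ x⁻¹ * y * x` by an
element `x` normalizing `S`. -/
def conjOn {H : Type*} [Group H] (S : Subgroup H) (x : H) (hx : x ∈ Subgroup.normalizer (S : Set H)) :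
    MulAut ↥S where
  toFun y := ⟨x⁻¹ * ↑y * x, by
    refine (Subgroup.mem_normalizer_iff.mp hx _).mpr ?_
    have : x * (x⁻¹ * ↑y * x) * x⁻¹ = (y : H) := by group
    rw [this]; exact y.2⟩
  invFun y := ⟨x * ↑y * x⁻¹, (Subgroup.mem_normalizer_iff.mp hx _).mp y.2⟩
  left_inv y := by ext; simp; group
  right_inv y := by ext; simp; group
  map_mul' y z := by ext; simp; group

/-- A Sylow `q`-subgroup of the commutator subgroup `H'`, viewed as a subgroup of `H`. -/
def sylowOfCommutator {H : Type*} [Group H] (q : ℕ) (S : Sylow q ↥(commutator H)) :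
    Subgroup H :=
  (S : Subgroup ↥(commutator H)).map (commutator H).subtype

theorem conjOn_eq_conjNormal_inv {H : Type*} [Group H] (S : Subgroup H) [S.Normal] (x : H)
    (hx : x ∈ Subgroup.normalizer (S : Set H)) :
    conjOn S x hx = (MulAut.conjNormal x)⁻¹ := by
  ext y
  simp [conjOn, mul_assoc]

theorem MulAut.commute_of_isCyclic {G : Type*} [Group G] [IsCyclic G] (a b : MulAut G) :
    Commute a b :=
  (IsCyclic.mulAutMulEquiv G).injective (by simp only [map_mul, mul_comm])

theorem MulAut.conjNormal_mulAut_apply_of_isCyclic {G : Type*} [Group G] {N : Subgroup G}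
    [N.Characteristic] [IsCyclic N] (β : MulAut G) (g : G) :
    (MulAut.conjNormal (β g) : MulAut N) = MulAut.conjNormal g := by
  set e := MulAut.characteristic N β
  have hintertwine : MulAut.conjNormal (β g) * e = e * MulAut.conjNormal g := by
    ext y
    simp [e]
  rw [← (MulAut.commute_of_isCyclic e _).eq] at hintertwine
  exact mul_left_cancel hintertwine

theorem Abelianization.of_conj {G : Type*} [Group G] (g y : G) :
    Abelianization.of (g⁻¹ * y * g) = Abelianization.of y := by
  rw [map_mul, map_mul, mul_right_comm, map_inv, inv_mul_cancel, one_mul]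

theorem Sylow.exists_abelianization_of_mulAut_apply_eq_zpow {G : Type*} [Group G] [Finite G]
    {p : ℕ} [Fact p.Prime] {P : Sylow p G} {x : G} (hP : (P : Subgroup G) = Subgroup.zpowers x)
    (β : MulAut G) : ∃ t : ℤ, Abelianization.of (β x) = Abelianization.of x ^ t := by
  obtain ⟨g, hg⟩ := MulAction.exists_smul_eq G P (β • P)
  have hconj : g⁻¹ * β x * g ∈ Subgroup.zpowers x := by
    have : β x ∈ ((β • P : Sylow p G) : Subgroup G) :=
      Subgroup.smul_mem_pointwise_smul x β _ (hP ▸ Subgroup.mem_zpowers x)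
    rwa [← hg, Sylow.coe_subgroup_smul, Subgroup.mem_pointwise_smul_iff_inv_smul_mem, hP,
      MulAut.smul_def, ← map_inv, MulAut.conj_apply, inv_inv] at this
  obtain ⟨t, ht⟩ := Subgroup.mem_zpowers_iff.mp hconj
  exact ⟨t, by rw [← Abelianization.of_conj g, ← ht, map_zpow]⟩

theorem orderOf_dvd_sub_one_of_abelianization_of_eq_zpow {G M : Type*} [Group G] [Group M]
    (φ : G →* M) {x y : G} (hφ : φ y = φ x) {t : ℤ}
    (ht : Abelianization.of y = Abelianization.of x ^ t)
    (hcop : (orderOf (φ x)).Coprime (Nat.card (commutator G))) :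
    (orderOf (φ x) : ℤ) ∣ t - 1 := by
  have hmem : x ^ (-t) * y ∈ commutator G := by
    rw [← Abelianization.ker_of, MonoidHom.mem_ker, map_mul, map_zpow, ht, ← zpow_add,
      neg_add_cancel, zpow_zero]
  have himage : φ (x ^ (-t) * y) = φ x ^ (1 - t) := by
    rw [map_mul, map_zpow, hφ, ← zpow_add_one, neg_add_eq_sub]
  have hord : orderOf (φ x ^ (1 - t)) = 1 := by
    refine Nat.eq_one_of_dvd_coprimes hcop
      (orderOf_dvd_of_mem_zpowers (Subgroup.zpow_mem_zpowers _ _)) ?_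
    rw [← himage]
    exact (orderOf_map_dvd φ _).trans ((commutator G).orderOf_dvd_natCard hmem)
  rw [← dvd_neg, neg_sub]
  exact orderOf_dvd_iff_zpow_eq_one.mpr (orderOf_eq_one_iff.mp hord)

theorem MonoidHom.map_eq_of_abelianization_of_eq_zpow {G M : Type*} [Group G] [CommGroup M]
    (σ : G →* M) {x y : G} {t : ℤ} {n : ℕ}
    (ht : Abelianization.of y = Abelianization.of x ^ t) (hmod : t ≡ 1 [ZMOD n])
    (hσ : σ x ^ n = 1) : σ y = σ x := by
  have hσy : σ y = σ x ^ t := by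
    rw [← Abelianization.lift_apply_of σ, ht, map_zpow, Abelianization.lift_apply_of]
  rw [hσy, ← zpow_one (σ x), ← zpow_mul, one_mul, zpow_eq_zpow_iff_modEq]
  exact hmod.of_dvd (Int.natCast_dvd_natCast.mpr (orderOf_dvd_of_pow_eq_one hσ))

section ZGroup

variable {H : Type*} [Group H] [Finite H] [IsZGroup H] {q : ℕ} (S : Sylow q (commutator H))

instance sylowOfCommutator.isCyclic : IsCyclic (sylowOfCommutator q S) :=
  have : IsCyclic (commutator H) := IsZGroup.isCyclic_commutator H
  isCyclic_of_surjective _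
    ((S : Subgroup (commutator H)).equivMapOfInjective _ (commutator H).subtype_injective).surjective

-- `H'` is cyclic, so `S` is normal, hence characteristic, in `H'`.
instance sylowOfCommutator.characteristic [Fact q.Prime] :
    (sylowOfCommutator q S).Characteristic :=
  have : IsCyclic (commutator H) := IsZGroup.isCyclic_commutator H
  have : (S : Subgroup (commutator H)).Characteristic := S.characteristic_of_normal inferInstance
  Subgroup.characteristic_of_characteristic_of_characteristic

end ZGroup

theorem aut_acts_trivially_on_acting_sylow_general {H : Type*} [Group H] [Finite H]
    (hC : ∀ (r : ℕ), r.Prime → ∀ P : Sylow r H, IsCyclic ↥P)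
    (p : ℕ) (hp : p.Prime) (hpnd : ¬ p ∣ Nat.card ↥(commutator H))
    (x : H) (P : Sylow p H) (hP : (P : Subgroup H) = Subgroup.zpowers x)
    (q : ℕ) (hq : q.Prime) (S : Sylow q ↥(commutator H))
    (hx : x ∈ Subgroup.normalizer (sylowOfCommutator q S : Set H))
    (c : ℕ)
    (hconj : orderOf (conjOn (sylowOfCommutator q S) x hx) = p ^ c) :
    (∀ β : MulAut H,
      (∃ t : ℤ, Abelianization.of (β x) = Abelianization.of x ^ t) ∧
      (∀ t : ℤ, Abelianization.of (β x) = Abelianization.of x ^ t →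
        t ≡ 1 [ZMOD ((p ^ c : ℕ) : ℤ)])) ∧
    (∀ (M : Type*) [CommGroup M] (σ : H →* M), σ x ^ (p ^ c) = 1 →
      ∀ β : MulAut H, σ (β x) = σ x) := by
  have : IsZGroup H := ⟨hC⟩
  have : Fact p.Prime := ⟨hp⟩
  have : Fact q.Prime := ⟨hq⟩
  have hord : orderOf (MulAut.conjNormal x : MulAut (sylowOfCommutator q S)) = p ^ c := by
    rw [← orderOf_inv, ← conjOn_eq_conjNormal_inv _ x hx, hconj]
  have hcop : (p ^ c).Coprime (Nat.card (commutator H)) :=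
    ((Nat.Prime.coprime_iff_not_dvd hp).mpr hpnd).pow_left c
  have part_i : ∀ β : MulAut H,
      (∃ t : ℤ, Abelianization.of (β x) = Abelianization.of x ^ t) ∧
      (∀ t : ℤ, Abelianization.of (β x) = Abelianization.of x ^ t →
        t ≡ 1 [ZMOD ((p ^ c : ℕ) : ℤ)]) := fun β ↦
    ⟨Sylow.exists_abelianization_of_mulAut_apply_eq_zpow hP β, fun t ht ↦ by
      have hdvd := orderOf_dvd_sub_one_of_abelianization_of_eq_zpow MulAut.conjNormal
        (MulAut.conjNormal_mulAut_apply_of_isCyclic β x) ht (hord ▸ hcop)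
      exact (Int.modEq_iff_dvd.mpr (hord ▸ hdvd)).symm⟩
  refine ⟨part_i, fun M _ σ hσ β ↦ ?_⟩
  obtain ⟨⟨t, ht⟩, hmod⟩ := part_i β
  exact σ.map_eq_of_abelianization_of_eq_zpow ht (hmod t ht) hσ

/-- Let `H` be a finite C-group with commutator subgroup `H'`, `p` a prime
not dividing `|H'|`, and `P = ⟨x⟩` a Sylow `p`-subgroup. Let `q` be a prime and `S` the Sylow
`q`-subgroup of `H'` (normal in `H`), and suppose conjugation by `x` induces an automorphism
of `S` of order `p^c`, `c ≥ 1`. Then (i) for every automorphism `β` of `H` there is an integer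
`t` with `β(x)H' = x^t H'`, and every such `t` satisfies `t ≡ 1 (mod p^c)`; (ii) for every
abelian group `M` and homomorphism `σ : H → M` with `σ(x)^(p^c) = 1` one has
`σ(β(x)) = σ(x)` for all automorphisms `β` of `H`. -/
theorem aut_acts_trivially_on_acting_sylow {H : Type*} [Group H] [Finite H]
    (hC : ∀ (r : ℕ), r.Prime → ∀ P : Sylow r H, IsCyclic ↥P)
    (p : ℕ) (hp : p.Prime) (hpnd : ¬ p ∣ Nat.card ↥(commutator H))
    (x : H) (P : Sylow p H) (hP : (P : Subgroup H) = Subgroup.zpowers x)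
    (q : ℕ) (hq : q.Prime) (S : Sylow q ↥(commutator H))
    (hSnormal : (sylowOfCommutator q S).Normal)
    (hx : x ∈ Subgroup.normalizer (sylowOfCommutator q S : Set H))
    (c : ℕ) (hc : 1 ≤ c)
    (hconj : orderOf (conjOn (sylowOfCommutator q S) x hx) = p ^ c) :
    (∀ β : MulAut H,
      (∃ t : ℤ, Abelianization.of (β x) = Abelianization.of x ^ t) ∧
      (∀ t : ℤ, Abelianization.of (β x) = Abelianization.of x ^ t →
        t ≡ 1 [ZMOD ((p ^ c : ℕ) : ℤ)])) ∧
    (∀ (M : Type*) [CommGroup M] (σ : H →* M), σ x ^ (p ^ c) = 1 →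
      ∀ β : MulAut H, σ (β x) = σ x) :=
  aut_acts_trivially_on_acting_sylow_general hC p hp hpnd x P hP q hq S hx c hconj
end

section
/- Let H be a finite group, p a prime, and P = ⟨x⟩ a Sylow p-subgroup of H that is contained in the center of H. Let M be a finite cyclic group and e ≥ 1 an integer with p^e dividing both |M| and |P|. Let X be the set of group homomorphisms σ : H → M such that σ(x) has order p^e and σ(y) = 1 for every element y ∈ H whose order is coprime to p. Then X is nonempty and the automorphism group Aut(H), acting on X by precomposition β·σ = σ∘β, acts transitively on X. -/
/-!
Burnside's transfer gives a retraction `π : H → P` whose kernel, a normal complement of the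
central Sylow subgroup `P`, has order prime to `p`. Every `σ ∈ X` kills that kernel, so
`σ = σ|_P ∘ π` is determined by `σ x`; conversely `ψ ∘ π ∈ X` for any `ψ : P → M` sending `x`
to an element of order `p ^ e`. For `σ, ω ∈ X`, cyclicity of `M` gives `ω x = σ x ^ u` with
`p ∤ u`, and `h ↦ h * π h ^ (u - 1)` is an automorphism `β` (a homomorphism because `P` is
central, injective because it is the `u`-th power map on `P`) with `ω = σ ∘ β`.
-/

def actSet {H M : Type*} [Group H] [CommGroup M] (p e : ℕ) (x : H) : Set (H →* M) :=
  {σ | orderOf (σ x) = p ^ e ∧ ∀ y : H, Nat.Coprime (orderOf y) p → σ y = 1}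

open Subgroup

theorem Subgroup.mem_zpowers_mk_of_eq_zpowers {G : Type*} [Group G] {K : Subgroup G} {x : G}
    (hK : K = zpowers x) (hx : x ∈ K) (a : K) : a ∈ zpowers (⟨x, hx⟩ : K) := by
  obtain ⟨i, hi⟩ := mem_zpowers_iff.mp (hK ▸ a.2 : (a : G) ∈ zpowers x)
  exact mem_zpowers_iff.mpr ⟨i, Subtype.ext (by simpa using hi)⟩

theorem IsCyclic.exists_orderOf_eq_of_dvd_natCard {M : Type*} [Group M] [IsCyclic M] [Finite M]
    {d : ℕ} (hd : d ∣ Nat.card M) : ∃ m : M, orderOf m = d := by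
  obtain ⟨g, hg⟩ := IsCyclic.exists_ofOrder_eq_natCard (α := M)
  exact ⟨g ^ (orderOf g / d), orderOf_pow_orderOf_div (hg ▸ Nat.card_pos.ne') (hg ▸ hd)⟩

theorem IsCyclic.exists_coprime_pow_eq_of_orderOf_eq {M : Type*} [CommGroup M] [IsCyclic M]
    [Finite M] {a b : M} (hab : orderOf b = orderOf a) :
    ∃ u : ℕ, (orderOf a).Coprime u ∧ b = a ^ u := by
  have ha : orderOf a ≠ 0 := (orderOf_pos a).ne'
  have hle : zpowers a ≤ (powMonoidHom (orderOf a) : M →* M).ker := by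
    rw [zpowers_le]
    exact pow_orderOf_eq_one a
  have heq : zpowers a = (powMonoidHom (orderOf a) : M →* M).ker :=
    eq_of_le_of_card_ge hle (by
      rw [IsCyclic.card_powMonoidHom_ker, Nat.card_zpowers]
      exact Nat.gcd_le_right _ (Nat.pos_of_ne_zero ha))
  have hb : b ∈ zpowers a := by
    rw [heq, MonoidHom.mem_ker, powMonoidHom_apply, ← hab, pow_orderOf_eq_one]
  obtain ⟨u, rfl⟩ := (mem_powers_iff_mem_zpowers.mpr hb : b ∈ Submonoid.powers a)
  refine ⟨u, ?_, rfl⟩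
  rw [orderOf_pow, Nat.div_eq_self] at hab
  exact hab.resolve_left ha

section Retraction

variable {G : Type*} [Group G] {K : Subgroup G} {π : G →* K}

theorem MonoidHom.comp_subtype_comp_retraction {M : Type*} [Group M] (hπ : ∀ a : K, π a = a)
    (f : G →* M) (hf : π.ker ≤ f.ker) : (f.comp K.subtype).comp π = f := by
  ext g
  have hg : (π g : G)⁻¹ * g ∈ π.ker := by
    rw [MonoidHom.mem_ker, map_mul, map_inv, hπ, inv_mul_cancel]
  have hfg : (f (π g))⁻¹ * f g = 1 := by
    simpa only [MonoidHom.mem_ker, map_mul, map_inv] using hf hg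
  exact inv_mul_eq_one.mp hfg

theorem MonoidHom.eq_of_ker_retraction_le {M : Type*} [Group M] (hπ : ∀ a : K, π a = a) {x : G}
    (hK : K = zpowers x) {f f' : G →* M} (hf : π.ker ≤ f.ker) (hf' : π.ker ≤ f'.ker)
    (hx : f x = f' x) : f = f' := by
  rw [← comp_subtype_comp_retraction hπ f hf, ← comp_subtype_comp_retraction hπ f' hf']
  have hxK : x ∈ K := hK ▸ mem_zpowers x
  congr 1
  exact (MonoidHom.eq_iff_eq_on_generator (mem_zpowers_mk_of_eq_zpowers hK hxK) _ _).mpr hx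

variable (hK : K ≤ center G)

def centralTwist (π : G →* K) (n : ℕ) : G →* G where
  toFun g := g * (π g : G) ^ n
  map_one' := by simp
  map_mul' g h := by
    have hcomm : Commute (π g : G) (π h) := mem_center_iff.mp (hK (π h).2) (π g)
    have hcentral : (π g : G) ^ n ∈ center G := pow_mem (hK (π g).2) n
    rw [map_mul, coe_mul, hcomm.mul_pow, mul_assoc g h, ← mul_assoc h,
      mem_center_iff.mp hcentral h]
    group

theorem centralTwist_apply (n : ℕ) (g : G) : centralTwist hK π n g = g * (π g : G) ^ n := rfl

theorem centralTwist_injective (hπ : ∀ a : K, π a = a) {n : ℕ}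
    (hn : (Nat.card K).Coprime (n + 1)) :
    Function.Injective (centralTwist hK π n) := by
  refine (injective_iff_map_eq_one _).mpr fun g hg => ?_
  rw [centralTwist_apply] at hg
  have hgK : g ∈ K := eq_inv_of_mul_eq_one_left hg ▸ inv_mem (pow_mem (π g).2 n)
  rw [congrArg Subtype.val (hπ ⟨g, hgK⟩), ← pow_succ'] at hg
  have hpow : (⟨g, hgK⟩ : K) ^ (n + 1) = 1 := Subtype.ext hg
  simpa using congrArg Subtype.val ((pow_eq_one_iff_of_coprime hn).mp ⟨pow_card_eq_one', hpow⟩)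

end Retraction

theorem Sylow.exists_retraction_not_dvd_card_ker {G : Type*} [Group G] [Finite G] {p : ℕ}
    [Fact p.Prime] (P : Sylow p G) (hP : normalizer P ≤ centralizer (P : Set G)) :
    ∃ π : G →* P, (∀ a : P, π a = a) ∧ ¬ p ∣ Nat.card π.ker := by
  let τ := MonoidHom.transferSylow P hP
  have hbij : Function.Bijective (τ.domRestrict (P : Subgroup G)) :=
    (MonoidHom.transferSylow_domRestrict_eq_pow P hP).symm ▸
      (P.2.powEquiv' P.not_dvd_index).bijective
  let α := MulEquiv.ofBijective _ hbij
  refine ⟨α.symm.toMonoidHom.comp τ, fun a => α.symm_apply_apply a, ?_⟩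
  rw [MonoidHom.ker_comp_of_injective _ _ α.symm.injective]
  exact MonoidHom.not_dvd_card_ker_transferSylow P hP

section ActSet

variable {H M : Type*} [Group H] [CommGroup M] {p e : ℕ} {x : H}

theorem le_ker_of_mem_actSet [Fact p.Prime] {N : Subgroup H} (hN : ¬ p ∣ Nat.card N)
    {σ : H →* M} (hσ : σ ∈ actSet p e x) : N ≤ σ.ker := fun y hy =>
  hσ.2 y <| Nat.Coprime.coprime_dvd_left (N.orderOf_dvd_natCard hy)
    ((Nat.Prime.coprime_iff_not_dvd Fact.out).mpr hN).symm

variable {K : Subgroup H} {π : H →* K}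

theorem actSet_nonempty (hKx : K = zpowers x) (hKp : IsPGroup p K) (hπ : ∀ a : K, π a = a)
    {m : M} (hm : orderOf m = p ^ e) (hdvd : p ^ e ∣ Nat.card K) :
    (actSet p e x : Set (H →* M)).Nonempty := by
  have hxK : x ∈ K := hKx ▸ mem_zpowers x
  have hgen := mem_zpowers_mk_of_eq_zpowers hKx hxK
  have hord : orderOf m ∣ orderOf (⟨x, hxK⟩ : K) := by
    rwa [orderOf_eq_card_of_forall_mem_zpowers hgen, hm]
  refine ⟨(monoidHomOfForallMemZpowers hgen hord).comp π, ?_, fun y hy => ?_⟩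
  · rw [MonoidHom.comp_apply, show π x = ⟨x, hxK⟩ from hπ ⟨x, hxK⟩,
      monoidHomOfForallMemZpowers_apply_gen, hm]
  · have hπy : π y = 1 := orderOf_eq_one_iff.mp <|
      (hKp.orderOf_coprime hy.symm (π y)).eq_one_of_dvd (orderOf_map_dvd π y)
    rw [MonoidHom.comp_apply, hπy, map_one]

theorem exists_mulAut_eq_comp_of_mem_actSet [Finite H] [IsCyclic M] [Finite M] [Fact p.Prime]
    (he : 1 ≤ e) (hKx : K = zpowers x) (hK : K ≤ center H) (hKp : IsPGroup p K)
    (hπ : ∀ a : K, π a = a) (hker : ¬ p ∣ Nat.card π.ker) {σ ω : H →* M}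
    (hσ : σ ∈ actSet p e x) (hω : ω ∈ actSet p e x) :
    ∃ β : MulAut H, ω = σ.comp β.toMonoidHom := by
  obtain ⟨u, hu, hωx⟩ := IsCyclic.exists_coprime_pow_eq_of_orderOf_eq (hω.1.trans hσ.1.symm)
  rw [hσ.1] at hu
  have hpu : p.Coprime u := (Nat.coprime_pow_left_iff he _ _).mp hu
  obtain ⟨n, rfl⟩ : ∃ n, u = n + 1 := Nat.exists_eq_succ_of_ne_zero <| by
    rintro rfl
    exact (Fact.out : p.Prime).one_lt.ne' (Nat.coprime_zero_right _ |>.mp hpu)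
  obtain ⟨k, hk⟩ := IsPGroup.iff_card.mp hKp
  have hinj := centralTwist_injective hK hπ (hk ▸ hpu.pow_left k)
  refine ⟨MulEquiv.ofBijective _ (Finite.injective_iff_bijective.mp hinj), ?_⟩
  have hxK : x ∈ K := hKx ▸ mem_zpowers x
  refine MonoidHom.eq_of_ker_retraction_le hπ hKx (le_ker_of_mem_actSet hker hω)
    (fun g hg => ?_) ?_
  · have hσg : σ g = 1 := le_ker_of_mem_actSet hker hσ hg
    change σ (g * (π g : H) ^ n) = 1
    rw [MonoidHom.mem_ker.mp hg, OneMemClass.coe_one, one_pow, mul_one, hσg]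
  · show ω x = σ (x * (π x : H) ^ n)
    rw [congrArg Subtype.val (hπ ⟨x, hxK⟩), ← pow_succ', map_pow, hωx]

end ActSet

/-- Let `H` be a finite group, `p` a prime, and `P = ⟨x⟩` a central Sylow
`p`-subgroup of `H`. Let `M` be a finite cyclic group and `e ≥ 1` with `p^e` dividing `|M|`
and `|P|`. Then the set `X` of homomorphisms `σ : H → M` with `σ x` of order `p^e` killing
all elements of order coprime to `p` is nonempty, and `Aut(H)` acts transitively on `X`
by precomposition. -/
theorem aut_transitive_on_actions_of_central_sylow {H : Type*} [Group H] [Finite H]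
    (p : ℕ) (hp : p.Prime)
    (x : H) (P : Sylow p H) (hP : (P : Subgroup H) = Subgroup.zpowers x)
    (hcentral : (P : Subgroup H) ≤ Subgroup.center H)
    {M : Type*} [CommGroup M] [Finite M] (hM : IsCyclic M)
    (e : ℕ) (he : 1 ≤ e)
    (hdM : p ^ e ∣ Nat.card M) (hdP : p ^ e ∣ Nat.card ↥(P : Subgroup H)) :
    (actSet p e x : Set (H →* M)).Nonempty ∧
    ∀ σ ∈ (actSet p e x : Set (H →* M)), ∀ ω ∈ (actSet p e x : Set (H →* M)),
      ∃ β : MulAut H, ω = σ.comp β.toMonoidHom := by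
  have := Fact.mk hp
  have hnorm : normalizer P ≤ centralizer (P : Set H) := fun g _ =>
    mem_centralizer_iff.mpr fun h hh => (mem_center_iff.mp (hcentral hh) g).symm
  obtain ⟨π, hπ, hker⟩ := P.exists_retraction_not_dvd_card_ker hnorm
  obtain ⟨m, hm⟩ := IsCyclic.exists_orderOf_eq_of_dvd_natCard hdM
  exact ⟨actSet_nonempty hP P.isPGroup' hπ hm hdP, fun σ hσ ω hω =>
    exists_mulAut_eq_comp_of_mem_actSet he hP hcentral P.isPGroup' hπ hker hσ hω⟩
end
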